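/- Let 0 < λ < n, α ≤ 0, 1 ≤ p < ∞, and suppose for each annular piece f_i = f·χ_{B(x₀,2^{i+1}r)\B(x₀,2^i r)} one has ∫_{B(x₀,r)} |Tf_i|^p ≤ C 2^{-ni}(1 + 2^i r/γ(x₀))^{-Np} ∫_{B(x₀,2^{i+1}r)} |f_i|^p with N = ⌊-α⌋ + 1. If f ∈ L^{p,λ}_{α,V}(ℝⁿ) then Σ_{i≥1} (∫_{B(x₀,r)} |Tf_i|^p)^{1/p} ≤ C' r^{λ/p}(1 + r/γ(x₀))^{-α/p} ‖f‖_{L^{p,λ}_{α,V}}. -/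

import Mathlib

open MeasureTheory Metric Real ENNReal

/-- The Morrey space quantity `‖f‖^p_{L^{p,λ}_{α,V}} =
sup_{B(x₀,r)} (1+r/γ(x₀))^α r^{-λ} ∫_{B(x₀,r)} |f|^p` associated with the critical radius
function `γ` of a potential `V`. -/
noncomputable def morreyV {n : ℕ} (p lam α : ℝ) (γ : EuclideanSpace ℝ (Fin n) → ℝ)
    (f : EuclideanSpace ℝ (Fin n) → ℝ) : ℝ≥0∞ :=
  ⨆ (x₀ : EuclideanSpace ℝ (Fin n)) (r : {r : ℝ // 0 < r}),
    ENNReal.ofReal ((1 + r.1 / γ x₀) ^ α * r.1 ^ (-lam)) *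
      ∫⁻ y in ball x₀ r.1, ENNReal.ofReal (|f y| ^ p)

/-- The annular piece `f_i = f·χ_{B(x₀,2^{i+1}r)\B(x₀,2^i r)}`. -/
noncomputable def annularPiece {n : ℕ} (x₀ : EuclideanSpace ℝ (Fin n)) (r : ℝ)
    (f : EuclideanSpace ℝ (Fin n) → ℝ) (i : ℕ) : EuclideanSpace ℝ (Fin n) → ℝ :=
  (ball x₀ (2 ^ (i + 1) * r) \ ball x₀ (2 ^ i * r)).indicator f

private lemma aux_decay (p α : ℝ) (hp : 1 ≤ p) (hα : α ≤ 0) (t : ℝ) (ht : 0 < t) (j : ℕ) :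
    (1 + 2 ^ j * t) ^ (-((⌊-α⌋₊ + 1 : ℕ) : ℝ) * p) * (1 + 2 ^ (j + 1) * t) ^ (-α) ≤
      (2 : ℝ) ^ (-α) * (1 + t) ^ (-α) := by
  set N : ℝ := ((⌊-α⌋₊ + 1 : ℕ) : ℝ) with hNdef
  have hNα : -α ≤ N := by
    have := (Nat.lt_floor_add_one (-α)).le
    rw [hNdef]; push_cast; push_cast at this; linarith
  have hN0 : 0 ≤ N := le_trans (by linarith) hNα
  have hNp : 0 ≤ N * p + α := by nlinarith
  have hpow : (1 : ℝ) ≤ 2 ^ j := one_le_pow₀ (by norm_num)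
  have hb : (0:ℝ) < 1 + 2 ^ j * t := by positivity
  have hb1 : (0:ℝ) < 1 + t := by linarith
  have h1 : (1 + 2 ^ (j+1) * t) ^ (-α) ≤ (2 : ℝ) ^ (-α) * (1 + 2 ^ j * t) ^ (-α) := by
    rw [← Real.mul_rpow (by norm_num) hb.le]
    apply Real.rpow_le_rpow (by positivity) ?_ (neg_nonneg.2 hα)
    rw [pow_succ]
    nlinarith
  calc (1 + 2 ^ j * t) ^ (-N * p) * (1 + 2 ^ (j + 1) * t) ^ (-α)
      ≤ (1 + 2 ^ j * t) ^ (-N * p) * ((2 : ℝ) ^ (-α) * (1 + 2 ^ j * t) ^ (-α)) :=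
        mul_le_mul_of_nonneg_left h1 (Real.rpow_nonneg hb.le _)
    _ = (2 : ℝ) ^ (-α) * ((1 + 2 ^ j * t) ^ (-N * p) * (1 + 2 ^ j * t) ^ (-α)) := by ring
    _ = (2 : ℝ) ^ (-α) * (1 + 2 ^ j * t) ^ (-N * p + -α) := by
        rw [← Real.rpow_add hb]
    _ ≤ (2 : ℝ) ^ (-α) * (1 + t) ^ (-N * p + -α) := by
        refine mul_le_mul_of_nonneg_left ?_ (Real.rpow_nonneg (by norm_num) _)
        refine Real.rpow_le_rpow_of_nonpos hb1 ?_ (by linarith)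
        nlinarith
    _ ≤ (2 : ℝ) ^ (-α) * (1 + t) ^ (-α) := by
        refine mul_le_mul_of_nonneg_left ?_ (Real.rpow_nonneg (by norm_num) _)
        refine Real.rpow_le_rpow_of_exponent_le (by linarith) (by nlinarith)

private lemma aux_root (p K q r s α lam : ℝ) (hp : 0 < p) (hK : 0 ≤ K) (hq : 0 < q)
    (hr : 0 ≤ r) (hs : 0 ≤ s) (i : ℕ) :
    (K * q ^ (p * ((i:ℝ)+1)) * (r ^ lam * s ^ (-α))) ^ (1/p)
      = K ^ (1/p) * q * q ^ i * (r ^ (lam/p) * s ^ (-α/p)) := by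
  rw [Real.mul_rpow (mul_nonneg hK (Real.rpow_nonneg hq.le _))
        (mul_nonneg (Real.rpow_nonneg hr _) (Real.rpow_nonneg hs _)),
      Real.mul_rpow hK (Real.rpow_nonneg hq.le _),
      Real.mul_rpow (Real.rpow_nonneg hr _) (Real.rpow_nonneg hs _),
      ← Real.rpow_mul hq.le, ← Real.rpow_mul hr, ← Real.rpow_mul hs]
  have e1 : p * ((i:ℝ)+1) * (1/p) = (i:ℝ) + 1 := by field_simp
  rw [e1, show lam * (1/p) = lam/p from by ring, show -α * (1/p) = -α/p from by ring,
    Real.rpow_add hq, Real.rpow_one, Real.rpow_natCast]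
  ring

/-- The summation step in the proof of Theorem 1.2: the annular estimates with decay
`N = ⌊-α⌋+1` sum to the Morrey bound
`Σ_{i≥1}(∫_{B(x₀,r)}|Tf_i|^p)^{1/p} ≤ C' r^{λ/p}(1+r/γ(x₀))^{-α/p}‖f‖_{L^{p,λ}_{α,V}}`. -/
theorem annular_summation_step (n : ℕ) (hn : 1 ≤ n) (p lam α : ℝ) (hp : 1 ≤ p)
    (hlam0 : 0 < lam) (hlamn : lam < n) (hα : α ≤ 0) (C : ℝ) (hC : 0 < C) :
    ∃ C' > 0, ∀ (γ : EuclideanSpace ℝ (Fin n) → ℝ), (∀ x, 0 < γ x) →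
      ∀ (T : (EuclideanSpace ℝ (Fin n) → ℝ) → EuclideanSpace ℝ (Fin n) → ℝ)
        (f : EuclideanSpace ℝ (Fin n) → ℝ) (x₀ : EuclideanSpace ℝ (Fin n)) (r : ℝ),
        0 < r → morreyV p lam α γ f ≠ ⊤ →
        (∀ i : ℕ, 1 ≤ i →
          (∫⁻ x in ball x₀ r, ENNReal.ofReal (|T (annularPiece x₀ r f i) x| ^ p)) ≤
            ENNReal.ofReal C * ENNReal.ofReal ((2 : ℝ) ^ (-(n : ℝ) * i)) *
              ENNReal.ofReal
                ((1 + 2 ^ i * r / γ x₀) ^ (-((⌊-α⌋₊ + 1 : ℕ) : ℝ) * p)) *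
              ∫⁻ y in ball x₀ (2 ^ (i + 1) * r),
                ENNReal.ofReal (|annularPiece x₀ r f i y| ^ p)) →
        (∑' i : ℕ, (∫⁻ x in ball x₀ r,
            ENNReal.ofReal (|T (annularPiece x₀ r f (i + 1)) x| ^ p)) ^ (1 / p)) ≤
          ENNReal.ofReal C' *
            ENNReal.ofReal (r ^ (lam / p) * (1 + r / γ x₀) ^ (-α / p)) *
              (morreyV p lam α γ f) ^ (1 / p) := by
  have hp0 : (0:ℝ) < p := lt_of_lt_of_le one_pos hp
  set q : ℝ := (2:ℝ) ^ ((lam - n)/p) with hqdef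
  have hq0 : 0 < q := Real.rpow_pos_of_pos two_pos _
  have hq1 : q < 1 := by
    refine Real.rpow_lt_one_of_one_lt_of_neg one_lt_two (div_neg_of_neg_of_pos ?_ hp0)
    have : (lam : ℝ) < n := hlamn
    linarith
  set K : ℝ := C * (2:ℝ) ^ (lam - α) with hKdef
  have hK0 : 0 < K := mul_pos hC (Real.rpow_pos_of_pos two_pos _)
  refine ⟨K ^ (1/p) * (q / (1 - q)), mul_pos (Real.rpow_pos_of_pos hK0 _) (div_pos hq0 (by linarith)), ?_⟩
  intro γ hγ T f x₀ r hr hMtop hyp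
  set M := morreyV p lam α γ f with hMdef
  set t : ℝ := r / γ x₀ with htdef
  have ht : 0 < t := div_pos hr (hγ x₀)
  have hγ0 : 0 < γ x₀ := hγ x₀
  -- main per-index estimate
  have key : ∀ j : ℕ, 1 ≤ j →
      (∫⁻ x in ball x₀ r, ENNReal.ofReal (|T (annularPiece x₀ r f j) x| ^ p)) ≤
        ENNReal.ofReal (K * q ^ (p * (j:ℝ)) * (r ^ lam * (1 + t) ^ (-α))) * M := by
    intro j hj
    have hRpos : (0:ℝ) < 2 ^ (j+1) * r := by positivity
    set c : ℝ := (1 + (2 ^ (j+1) * r) / γ x₀) ^ α * (2 ^ (j+1) * r) ^ (-lam) with hcdef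
    have hc0 : 0 < c := mul_pos (Real.rpow_pos_of_pos (by have := hγ x₀; positivity) _)
      (Real.rpow_pos_of_pos hRpos _)
    have hmem : ENNReal.ofReal c *
        (∫⁻ y in ball x₀ (2 ^ (j+1) * r), ENNReal.ofReal (|f y| ^ p)) ≤ M := by
      rw [hMdef, morreyV]
      exact le_iSup_of_le x₀ (le_iSup_of_le ⟨_, hRpos⟩ le_rfl)
    have hJ : (∫⁻ y in ball x₀ ((2:ℝ) ^ (j+1) * r), ENNReal.ofReal (|f y| ^ p)) ≤
        ENNReal.ofReal c⁻¹ * M := by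
      rw [ENNReal.ofReal_inv_of_pos hc0]
      calc (∫⁻ y in ball x₀ ((2:ℝ) ^ (j+1) * r), ENNReal.ofReal (|f y| ^ p))
          = (ENNReal.ofReal c)⁻¹ *
            (ENNReal.ofReal c *
              (∫⁻ y in ball x₀ ((2:ℝ) ^ (j+1) * r), ENNReal.ofReal (|f y| ^ p))) := by
            rw [← mul_assoc, ENNReal.inv_mul_cancel (ne_of_gt (ENNReal.ofReal_pos.2 hc0))
              ENNReal.ofReal_ne_top, one_mul]
        _ ≤ (ENNReal.ofReal c)⁻¹ * M := mul_le_mul_right hmem _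
    have hind : (∫⁻ y in ball x₀ ((2:ℝ) ^ (j+1) * r),
        ENNReal.ofReal (|annularPiece x₀ r f j y| ^ p)) ≤
        (∫⁻ y in ball x₀ ((2:ℝ) ^ (j+1) * r), ENNReal.ofReal (|f y| ^ p)) := by
      refine lintegral_mono fun y => ?_
      refine ENNReal.ofReal_le_ofReal (Real.rpow_le_rpow (abs_nonneg _) ?_ (by linarith))
      unfold annularPiece
      by_cases h : y ∈ ball x₀ (2 ^ (j+1) * r) \ ball x₀ (2 ^ j * r)
      · simp [Set.indicator_of_mem h]
      · simp [Set.indicator_of_notMem h, abs_nonneg]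
    calc (∫⁻ x in ball x₀ r, ENNReal.ofReal (|T (annularPiece x₀ r f j) x| ^ p))
        ≤ ENNReal.ofReal C * ENNReal.ofReal ((2 : ℝ) ^ (-(n : ℝ) * j)) *
            ENNReal.ofReal ((1 + 2 ^ j * r / γ x₀) ^ (-((⌊-α⌋₊ + 1 : ℕ) : ℝ) * p)) *
              ∫⁻ y in ball x₀ (2 ^ (j + 1) * r),
                ENNReal.ofReal (|annularPiece x₀ r f j y| ^ p) := hyp j hj
      _ ≤ ENNReal.ofReal C * ENNReal.ofReal ((2 : ℝ) ^ (-(n : ℝ) * j)) *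
            ENNReal.ofReal ((1 + 2 ^ j * r / γ x₀) ^ (-((⌊-α⌋₊ + 1 : ℕ) : ℝ) * p)) *
              (ENNReal.ofReal c⁻¹ * M) := mul_le_mul' le_rfl (hind.trans hJ)
      _ = ENNReal.ofReal (C * (2 : ℝ) ^ (-(n : ℝ) * j) *
            (1 + 2 ^ j * r / γ x₀) ^ (-((⌊-α⌋₊ + 1 : ℕ) : ℝ) * p) * c⁻¹) * M := by
          have hb0 : (0:ℝ) ≤ 1 + 2 ^ j * r / γ x₀ := by positivity
          rw [← mul_assoc, ← ENNReal.ofReal_mul (by positivity),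
            ← ENNReal.ofReal_mul (by positivity), ← ENNReal.ofReal_mul (by positivity)]
      _ ≤ ENNReal.ofReal (K * q ^ (p * (j:ℝ)) * (r ^ lam * (1 + t) ^ (-α))) * M := by
          refine mul_le_mul_left (ENNReal.ofReal_le_ofReal ?_) M
          -- the real-number inequality
          have hcinv : c⁻¹ = (1 + 2 ^ (j+1) * t) ^ (-α) * ((2:ℝ) ^ (j+1) * r) ^ lam := by
            rw [hcdef, mul_inv, ← Real.rpow_neg (by positivity),
              ← Real.rpow_neg hRpos.le, neg_neg]
            congr 2
            rw [htdef, mul_div_assoc]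
          have hq' : q ^ (p * (j:ℝ)) = (2:ℝ) ^ ((lam - n) * (j:ℝ)) := by
            rw [hqdef, ← Real.rpow_mul (by norm_num)]
            congr 1
            field_simp
          have hsplit : ((2:ℝ) ^ (j+1) * r) ^ lam = (2:ℝ) ^ (((j:ℝ)+1) * lam) * r ^ lam := by
            rw [Real.mul_rpow (by positivity) hr.le, ← Real.rpow_natCast 2 (j+1),
              ← Real.rpow_mul (by norm_num)]
            push_cast
            ring_nf
          have htj : 2 ^ j * r / γ x₀ = 2 ^ j * t := by rw [htdef, mul_div_assoc]
          rw [hcinv, hq', hsplit, htj]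
          have hdec := aux_decay p α hp hα t ht j
          have h2 : ∀ a b : ℝ, (2:ℝ) ^ a * (2:ℝ) ^ b = (2:ℝ) ^ (a+b) :=
            fun a b => (Real.rpow_add two_pos a b).symm
          calc C * (2:ℝ) ^ (-(n:ℝ) * j) *
                (1 + 2 ^ j * t) ^ (-((⌊-α⌋₊ + 1 : ℕ) : ℝ) * p) *
                ((1 + 2 ^ (j+1) * t) ^ (-α) * ((2:ℝ) ^ (((j:ℝ)+1) * lam) * r ^ lam))
              = (C * (2:ℝ) ^ (-(n:ℝ) * j) * (2:ℝ) ^ (((j:ℝ)+1) * lam) * r ^ lam) *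
                ((1 + 2 ^ j * t) ^ (-((⌊-α⌋₊ + 1 : ℕ) : ℝ) * p) *
                  (1 + 2 ^ (j+1) * t) ^ (-α)) := by ring
            _ ≤ (C * (2:ℝ) ^ (-(n:ℝ) * j) * (2:ℝ) ^ (((j:ℝ)+1) * lam) * r ^ lam) *
                ((2:ℝ) ^ (-α) * (1 + t) ^ (-α)) :=
                mul_le_mul_of_nonneg_left hdec (by positivity)
            _ = C * r ^ lam * (1 + t) ^ (-α) *
                ((2:ℝ) ^ (-(n:ℝ) * j) * (2:ℝ) ^ (((j:ℝ)+1) * lam) * (2:ℝ) ^ (-α)) := by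
                ring
            _ = C * r ^ lam * (1 + t) ^ (-α) *
                ((2:ℝ) ^ (-(n:ℝ) * j + ((j:ℝ)+1) * lam + -α)) := by rw [h2, h2]
            _ = C * r ^ lam * (1 + t) ^ (-α) *
                ((2:ℝ) ^ ((lam - α) + (lam - n) * (j:ℝ))) := by ring_nf
            _ = K * (2:ℝ) ^ ((lam - n) * (j:ℝ)) * (r ^ lam * (1 + t) ^ (-α)) := by
                rw [hKdef, ← h2]; ring
  -- take p-th roots
  have key2 : ∀ i : ℕ,
      (∫⁻ x in ball x₀ r, ENNReal.ofReal (|T (annularPiece x₀ r f (i+1)) x| ^ p)) ^ (1/p) ≤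
        ENNReal.ofReal (K ^ (1/p) * q * q ^ i) *
          (ENNReal.ofReal (r ^ (lam/p) * (1 + t) ^ (-α/p)) * M ^ (1/p)) := by
    intro i
    have h := key (i+1) (Nat.le_add_left 1 i)
    have h1 : (∫⁻ x in ball x₀ r,
        ENNReal.ofReal (|T (annularPiece x₀ r f (i+1)) x| ^ p)) ^ (1/p) ≤
        (ENNReal.ofReal (K * q ^ (p * ((i:ℝ)+1)) * (r ^ lam * (1 + t) ^ (-α))) * M) ^ (1/p) := by
      refine ENNReal.rpow_le_rpow ?_ (by positivity)
      convert h using 4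
      push_cast
      ring
    refine h1.trans (le_of_eq ?_)
    rw [ENNReal.mul_rpow_of_nonneg _ _ (by positivity),
      ENNReal.ofReal_rpow_of_nonneg (by positivity) (by positivity),
      aux_root p K q r (1+t) α lam hp0 hK0.le hq0 hr.le (by linarith),
      ENNReal.ofReal_mul (by positivity), mul_assoc]
  -- sum up
  have hsum : (∑' i : ℕ, (∫⁻ x in ball x₀ r,
      ENNReal.ofReal (|T (annularPiece x₀ r f (i + 1)) x| ^ p)) ^ (1 / p)) ≤
      (∑' i : ℕ, ENNReal.ofReal (K ^ (1/p) * q * q ^ i)) *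
        (ENNReal.ofReal (r ^ (lam/p) * (1 + t) ^ (-α/p)) * M ^ (1/p)) := by
    rw [← ENNReal.tsum_mul_right]
    exact ENNReal.tsum_le_tsum key2
  have hgeo : (∑' i : ℕ, ENNReal.ofReal (K ^ (1/p) * q * q ^ i)) =
      ENNReal.ofReal (K ^ (1/p) * (q / (1 - q))) := by
    rw [← ENNReal.ofReal_tsum_of_nonneg (fun i => by positivity)
      (Summable.mul_left _ (summable_geometric_of_lt_one hq0.le hq1))]
    congr 1
    rw [tsum_mul_left, tsum_geometric_of_lt_one hq0.le hq1]
    rw [div_eq_mul_inv]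
    ring
  refine hsum.trans (le_of_eq ?_)
  rw [hgeo]
  ring
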